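/- Let G be a hereditarily non-topologizable group and let H be a subgroup of G. If H is solvable, then H is finite. -/

import Mathlib

def NonTopologizable (G : Type*) [Group G] : Prop :=
  ∀ t : TopologicalSpace G, @IsTopologicalGroup G t _ → @T2Space G t → t = ⊥

def HereditarilyNonTopologizable (G : Type*) [Group G] : Prop :=
  ∀ (H : Subgroup G) (N : Subgroup ↥H) [N.Normal], NonTopologizable (↥H ⧸ N)

/-!
Characters into `ℚ/ℤ ⊆ ℝ/ℤ` separate the points of an abelian group `A`, so `A` embeds into a
product of circles. The topology induced from this compact group is a Hausdorff group topology; if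
it is discrete, the image of `A` is a discrete, hence closed, hence compact subgroup, so `A` is
finite. Hence for every subgroup `K` of `G` the abelianization `K ⧸ [K, K]` is finite, so `K` is
finite as soon as `[K, K]` is; for solvable `K`, descend along its derived series, viewed in `G`.
-/

open Topology

noncomputable def AddCircle.ratCastHom : AddCircle (1 : ℚ) →+ AddCircle (1 : ℝ) :=
  QuotientAddGroup.map _ _ (Rat.castHom ℝ).toAddMonoidHom <|
    AddSubgroup.zmultiples_le.2 (by simp)

theorem AddCircle.ratCastHom_injective : Function.Injective AddCircle.ratCastHom := by
  refine (injective_iff_map_eq_zero _).2 fun x hx => ?_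
  induction x using QuotientAddGroup.induction_on with
  | H q =>
    change ((q : ℝ) : AddCircle (1 : ℝ)) = 0 at hx
    rw [QuotientAddGroup.eq_zero_iff, AddSubgroup.mem_zmultiples_iff] at hx ⊢
    obtain ⟨k, hk⟩ := hx
    simp only [zsmul_eq_mul, mul_one] at hk ⊢
    exact ⟨k, by exact_mod_cast hk⟩

noncomputable def CommGroup.toCirclePi (A : Type*) [CommGroup A] :
    A →* (CharacterModule (Additive A) → Circle) where
  toFun a χ := (AddCircle.ratCastHom (χ (.ofMul a))).toCircle
  map_one' := by ext1 χ; simp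
  map_mul' a b := by ext1 χ; simp [AddCircle.toCircle_add]

theorem CommGroup.toCirclePi_injective (A : Type*) [CommGroup A] :
    Function.Injective (CommGroup.toCirclePi A) := by
  refine (injective_iff_map_eq_one _).2 fun a ha => ?_
  suffices Additive.ofMul a = 0 from ofMul_eq_zero.1 this
  refine CharacterModule.eq_zero_of_character_apply fun χ => AddCircle.ratCastHom_injective ?_
  refine AddCircle.injective_toCircle one_ne_zero ?_
  rw [map_zero, AddCircle.toCircle_zero]
  exact congrFun ha χ

theorem finite_of_isEmbedding_of_discreteTopology {G K : Type*} [Group G] [TopologicalSpace G]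
    [DiscreteTopology G] [Group K] [TopologicalSpace K] [IsTopologicalGroup K] [CompactSpace K]
    [T2Space K] (f : G →* K) (hf : IsEmbedding f) : Finite G := by
  have : DiscreteTopology f.range := by
    let e := MonoidHom.ofInjective hf.injective
    refine DiscreteTopology.of_continuous_injective (f := e.symm) ?_ e.symm.injective
    rw [hf.continuous_iff]
    convert continuous_subtype_val
    exact funext (MonoidHom.apply_ofInjective_symm hf.injective)
  have hclosed : IsClosed (Set.range f) := by
    simpa using (Subgroup.isClosed_of_discrete : IsClosed (f.range : Set K))
  have : CompactSpace G := (IsClosedEmbedding.mk hf hclosed).compactSpace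
  exact finite_of_compact_of_discrete

theorem NonTopologizable.finite_of_injective {G K : Type*} [Group G] [Group K]
    [TopologicalSpace K] [IsTopologicalGroup K] [CompactSpace K] [T2Space K]
    (hG : NonTopologizable G) (f : G →* K) (hf : Function.Injective f) : Finite G := by
  let _ : TopologicalSpace G := .induced f ‹_›
  have hemb : IsEmbedding f := ⟨⟨rfl⟩, hf⟩
  have : IsTopologicalGroup G := topologicalGroup_induced f
  have : T2Space G := hemb.t2Space
  have : DiscreteTopology G := ⟨hG _ ‹_› ‹_›⟩
  exact finite_of_isEmbedding_of_discreteTopology f hemb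

theorem NonTopologizable.finite_of_commGroup {A : Type*} [CommGroup A] (hA : NonTopologizable A) :
    Finite A :=
  hA.finite_of_injective _ (CommGroup.toCirclePi_injective A)

namespace HereditarilyNonTopologizable

variable {G : Type*} [Group G]

theorem finite_of_finite_commutator (hG : HereditarilyNonTopologizable G) (K : Subgroup G)
    (hK : Finite (⁅K, K⁆ : Subgroup G)) : Finite K := by
  have : Finite (K ⧸ commutator K) :=
    NonTopologizable.finite_of_commGroup (A := Abelianization K) (hG K (commutator K))
  have : Finite (commutator K) := by
    have e := (commutator K).equivMapOfInjective K.subtype K.subtype_injective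
    rw [K.map_subtype_commutator] at e
    exact Finite.of_equiv _ e.symm.toEquiv
  exact Finite.of_equiv _ (Subgroup.groupEquivQuotientProdSubgroup (s := commutator K)).symm

theorem finite_of_derivedSeries_eq_bot (hG : HereditarilyNonTopologizable G) (K : Subgroup G)
    {n : ℕ} (hn : derivedSeries K n = ⊥) : Finite K := by
  let D : ℕ → Subgroup G := fun i => (derivedSeries K i).map K.subtype
  have hD : ∀ i, D (i + 1) = ⁅D i, D i⁆ := fun i => by
    simp only [D, derivedSeries_succ, Subgroup.map_commutator]
  have hfin : ∀ i ≤ n, Finite (D i) := fun i hi =>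
    Nat.decreasingInduction (fun i _ h => hG.finite_of_finite_commutator _ (hD i ▸ h))
      (by simp only [D, hn, Subgroup.map_bot]; infer_instance) hi
  simpa [D, ← MonoidHom.range_eq_map] using hfin 0 n.zero_le

end HereditarilyNonTopologizable

theorem solvable_subgroup_finite {G : Type*} [Group G]
    (hG : HereditarilyNonTopologizable G) (H : Subgroup G) [Group.IsSolvable ↥H] :
    Finite ↥H := by
  obtain ⟨n, hn⟩ := Group.IsSolvable.solvable (G := ↥H)
  exact hG.finite_of_derivedSeries_eq_bot H hn
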